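/- Let n₀, m₁, ..., m₇ be a fundamental system in genus 3 with n₀ even and all mᵢ odd. Then the 35 sums mᵢ + mⱼ + m_k (1 ≤ i < j < k ≤ 7) are pairwise distinct even characteristics, all different from n₀, and together with n₀ they exhaust all 36 even characteristics of F_2^6. -/

import Mathlib

open Finset

/-- The space of theta characteristics in genus `g`: pairs `(m', m'')` of vectors in `F_2^g`. -/
abbrev V (g : ℕ) := (Fin g → ZMod 2) × (Fin g → ZMod 2)

/-- The `F_2`-inner product of two vectors. -/
def dotp {g : ℕ} (a b : Fin g → ZMod 2) : ZMod 2 := ∑ i, a i * b i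

/-- The parity invariant `m'·m'' ∈ F_2`; `m` is even iff `par m = 0`. -/
def par {g : ℕ} (m : V g) : ZMod 2 := dotp m.1 m.2

/-- The sign `e(m) = (-1)^{m'·m''}`. -/
def e {g : ℕ} (m : V g) : ℤ := (-1) ^ (par m).val

/-- The syzygy invariant `e(m₁,m₂,m₃) = e(m₁)e(m₂)e(m₃)e(m₁+m₂+m₃)`. -/
def e3 {g : ℕ} (m₁ m₂ m₃ : V g) : ℤ := e m₁ * e m₂ * e m₃ * e (m₁ + m₂ + m₃)

/-- The standard symplectic form `⟨m,n⟩ = m'·n'' + m''·n'` on `F_2^{2g}`. -/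
def sp {g : ℕ} (m n : V g) : ZMod 2 := dotp m.1 n.2 + dotp m.2 n.1

/-! The vectors `uᵢ = mᵢ + n₀` satisfy `sp uᵢ uⱼ = 1` for `i ≠ j`: this is the azygeticity of
`n₀, mᵢ, mⱼ`. Pairing with `u_a` gives `sp u_a (∑_{i ∈ s} uᵢ) = #(s \ {a})`, so distinct index sets
of equal size have distinct `u`-sums (pair with an index in one but not the other), and an odd
set missing some index has nonzero `u`-sum. Translated back, the 35 triple sums of the `mᵢ` are
distinct and differ from `n₀`. They are even because
`e3 mᵢ mⱼ mₖ = e3 n₀ mᵢ mⱼ * e3 n₀ mᵢ mₖ * e3 n₀ mⱼ mₖ = -1` and the `mᵢ` are odd. Since there are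
exactly 36 even characteristics, `n₀` and the triple sums exhaust them. -/

section Symplectic

variable {g : ℕ}

lemma dotp_comm (a b : Fin g → ZMod 2) : dotp a b = dotp b a := by
  simp only [dotp, mul_comm]

lemma dotp_add_right (a b c : Fin g → ZMod 2) : dotp a (b + c) = dotp a b + dotp a c := by
  simp only [dotp, Pi.add_apply, mul_add, sum_add_distrib]

lemma sp_comm (x y : V g) : sp x y = sp y x := by
  rw [sp, sp, dotp_comm x.1, dotp_comm x.2, add_comm]

lemma sp_add_right (x y z : V g) : sp x (y + z) = sp x y + sp x z := by
  simp only [sp, Prod.fst_add, Prod.snd_add, dotp_add_right]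
  ring

lemma sp_add_left (x y z : V g) : sp (x + y) z = sp x z + sp y z := by
  rw [sp_comm, sp_add_right, sp_comm z, sp_comm z]

lemma sp_self (x : V g) : sp x x = 0 := by
  rw [sp, dotp_comm x.2]
  exact CharTwo.add_self_eq_zero _

lemma sp_zero_right (x : V g) : sp x 0 = 0 := by
  simp [sp, dotp]

lemma sp_sum_right {ι : Type*} (x : V g) (s : Finset ι) (f : ι → V g) :
    sp x (∑ i ∈ s, f i) = ∑ i ∈ s, sp x (f i) :=
  map_sum (AddMonoidHom.mk' (sp x) (sp_add_right x)) f s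

lemma par_add (x y : V g) : par (x + y) = par x + par y + sp x y := by
  simp only [par, sp, dotp, Prod.fst_add, Prod.snd_add, Pi.add_apply, add_mul, mul_add,
    sum_add_distrib]
  simp only [mul_comm (x.2 _)]
  ring

lemma par_add_add (x y z : V g) :
    par (x + y + z) = par x + par y + par z + (sp x y + sp x z + sp y z) := by
  rw [par_add, par_add, sp_add_left]
  ring

lemma e3_eq (x y z : V g) : e3 x y z = (-1) ^ (sp x y + sp x z + sp y z).val := by
  rw [e3, e, e, e, e, par_add_add]
  generalize par x = a, par y = b, par z = c, sp x y + sp x z + sp y z = s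
  revert a b c s
  decide

lemma e3_eq_neg_one_iff (x y z : V g) : e3 x y z = -1 ↔ sp x y + sp x z + sp y z = 1 := by
  rw [e3_eq]
  generalize sp x y + sp x z + sp y z = s
  revert s
  decide

-- The exponents agree mod 2: on the right each `sp n _` occurs twice.
lemma e3_eq_mul_e3 (n x y z : V g) : e3 x y z = e3 n x y * e3 n x z * e3 n y z := by
  simp only [e3_eq]
  generalize sp n x = a, sp n y = b, sp n z = c, sp x y = p, sp x z = q, sp y z = r
  revert a b c p q r
  decide

lemma par_add_add_eq_zero {x y z : V g} (hx : par x = 1) (hy : par y = 1) (hz : par z = 1)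
    (h : e3 x y z = -1) : par (x + y + z) = 0 := by
  rw [par_add_add, hx, hy, hz, (e3_eq_neg_one_iff x y z).1 h]
  decide

end Symplectic

section PairwiseOne

variable {ι : Type*} [DecidableEq ι] {g : ℕ} {u : ι → V g}

lemma sp_sum_eq_card_erase (hu : Pairwise fun i j => sp (u i) (u j) = 1) (a : ι)
    (s : Finset ι) : sp (u a) (∑ i ∈ s, u i) = #(s.erase a) := by
  rw [sp_sum_right, ← sum_erase s (sp_self (u a)), card_eq_sum_ones, Nat.cast_sum]
  refine sum_congr rfl fun i hi => ?_
  rw [hu (ne_of_mem_erase hi).symm, Nat.cast_one]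

lemma sum_ne_zero_of_notMem_of_odd (hu : Pairwise fun i j => sp (u i) (u j) = 1) {a : ι}
    {s : Finset ι} (ha : a ∉ s) (hs : Odd #s) : ∑ i ∈ s, u i ≠ 0 := by
  intro h
  have := sp_sum_eq_card_erase hu a s
  rw [h, sp_zero_right, erase_eq_of_notMem ha, (ZMod.natCast_eq_one_iff_odd).2 hs] at this
  exact zero_ne_one this

lemma eq_of_sum_eq_of_card_eq (hu : Pairwise fun i j => sp (u i) (u j) = 1) {s t : Finset ι}
    (hst : #s = #t) (h : ∑ i ∈ s, u i = ∑ i ∈ t, u i) : s = t := by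
  by_contra hne
  obtain ⟨a, has, hat⟩ : ∃ a ∈ s, a ∉ t :=
    not_subset.1 fun hsub => hne (eq_of_subset_of_card_le hsub hst.ge)
  have key := congrArg (sp (u a)) h
  rw [sp_sum_eq_card_erase hu, sp_sum_eq_card_erase hu, erase_eq_of_notMem hat,
    card_erase_of_mem has, ← hst] at key
  obtain ⟨k, hk⟩ := Nat.exists_eq_succ_of_ne_zero (card_ne_zero_of_mem has)
  rw [hk, Nat.succ_sub_one, Nat.cast_succ, left_eq_add] at key
  exact one_ne_zero key

end PairwiseOne

section Shift

variable {ι : Type*} {g : ℕ} {n₀ : V g} {m : ι → V g}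

lemma pairwise_sp_add_eq_one (h : ∀ i j, i ≠ j → e3 n₀ (m i) (m j) = -1) :
    Pairwise fun i j => sp (m i + n₀) (m j + n₀) = 1 := by
  intro i j hij
  have hsp := (e3_eq_neg_one_iff _ _ _).1 (h i j hij)
  rw [sp_add_left, sp_add_right, sp_add_right, sp_self, sp_comm (m i) n₀]
  linear_combination hsp

lemma e3_eq_neg_one_of_forall_e3_eq_neg_one (h : ∀ i j, i ≠ j → e3 n₀ (m i) (m j) = -1)
    {i j k : ι} (hij : i ≠ j) (hik : i ≠ k) (hjk : j ≠ k) : e3 (m i) (m j) (m k) = -1 := by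
  rw [e3_eq_mul_e3 n₀, h i j hij, h i k hik, h j k hjk]
  norm_num

lemma eq_of_sum_eq_of_card_eq_of_e3 (h : ∀ i j, i ≠ j → e3 n₀ (m i) (m j) = -1)
    {s t : Finset ι} (hst : #s = #t) (hsum : ∑ i ∈ s, m i = ∑ i ∈ t, m i) : s = t := by
  classical
  exact eq_of_sum_eq_of_card_eq (pairwise_sp_add_eq_one h) hst <| by
    rw [sum_add_distrib, sum_add_distrib, sum_const, sum_const, hsum, hst]

lemma sum_ne_of_notMem_of_odd (h : ∀ i j, i ≠ j → e3 n₀ (m i) (m j) = -1) {a : ι}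
    {s : Finset ι} (ha : a ∉ s) (hs : Odd #s) : ∑ i ∈ s, m i ≠ n₀ := by
  classical
  intro hsum
  apply sum_ne_zero_of_notMem_of_odd (pairwise_sp_add_eq_one h) ha hs
  obtain ⟨k, hk⟩ := hs
  rw [sum_add_distrib, hsum, sum_const, hk, ← succ_nsmul',
    show 2 * k + 1 + 1 = (k + 1) * 2 by ring, mul_nsmul, ZModModule.char_nsmul_eq_zero]

end Shift

lemma sum_triple {ι M : Type*} [DecidableEq ι] [AddCommMonoid M] (f : ι → M) {i j k : ι}
    (hij : i ≠ j) (hik : i ≠ k) (hjk : j ≠ k) : ∑ x ∈ {i, j, k}, f x = f i + f j + f k := by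
  rw [sum_insert (by simp [hij, hik]), sum_pair hjk, add_assoc]

lemma image_triples_eq_image_powersetCard {ι M : Type*} [Fintype ι] [DecidableEq ι]
    [AddCommMonoid M] [DecidableEq M] (f : ι → M) :
    (univ.filter (fun t : ι × ι × ι => t.1 ≠ t.2.1 ∧ t.1 ≠ t.2.2 ∧ t.2.1 ≠ t.2.2)).image
        (fun t => f t.1 + f t.2.1 + f t.2.2) =
      (powersetCard 3 univ).image (fun s => ∑ i ∈ s, f i) := by
  ext x
  simp only [mem_image, mem_filter, mem_univ, true_and, mem_powersetCard_univ, card_eq_three]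
  constructor
  · rintro ⟨⟨i, j, k⟩, ⟨hij, hik, hjk⟩, rfl⟩
    exact ⟨{i, j, k}, ⟨i, j, k, hij, hik, hjk, rfl⟩, sum_triple f hij hik hjk⟩
  · rintro ⟨_, ⟨i, j, k, hij, hik, hjk, rfl⟩, rfl⟩
    exact ⟨(i, j, k), ⟨hij, hik, hjk⟩, (sum_triple f hij hik hjk).symm⟩

lemma card_filter_par_eq_zero : #(univ.filter fun x : V 3 => par x = 0) = 36 := by
  decide

theorem fundamental_system_even_characteristics_general (n₀ : V 3) (m : Fin 7 → V 3)
    (hn : par n₀ = 0) (hm : ∀ i, par (m i) = 1)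
    (haz₂ : ∀ i j : Fin 7, i ≠ j → e3 n₀ (m i) (m j) = -1) :
    (∀ i j k i' j' k' : Fin 7, i ≠ j → i ≠ k → j ≠ k → i' ≠ j' → i' ≠ k' → j' ≠ k' →
      m i + m j + m k = m i' + m j' + m k' →
      ({i, j, k} : Finset (Fin 7)) = {i', j', k'}) ∧
    (∀ i j k : Fin 7, i ≠ j → i ≠ k → j ≠ k →
      par (m i + m j + m k) = 0 ∧ m i + m j + m k ≠ n₀) ∧
    (insert n₀
        ((univ.filter (fun t : Fin 7 × Fin 7 × Fin 7 =>
            t.1 ≠ t.2.1 ∧ t.1 ≠ t.2.2 ∧ t.2.1 ≠ t.2.2)).image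
          (fun t => m t.1 + m t.2.1 + m t.2.2)) =
      univ.filter (fun x : V 3 => par x = 0)) ∧
    (univ.filter (fun x : V 3 => par x = 0)).card = 36 := by
  have hne : ∀ s ∈ powersetCard 3 (univ : Finset (Fin 7)), ∑ i ∈ s, m i ≠ n₀ := by
    intro s hs
    rw [mem_powersetCard_univ] at hs
    obtain ⟨a, -, ha⟩ := exists_mem_notMem_of_card_lt_card (s := s) (t := univ) (by simp [hs])
    exact sum_ne_of_notMem_of_odd haz₂ ha (by rw [hs]; decide)
  have hinj : Set.InjOn (fun s => ∑ i ∈ s, m i) (powersetCard 3 (univ : Finset (Fin 7))) :=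
    fun s hs t ht => eq_of_sum_eq_of_card_eq_of_e3 haz₂ <| by
      rw [mem_powersetCard_univ.1 hs, mem_powersetCard_univ.1 ht]
  have htriple {i j k : Fin 7} (hij : i ≠ j) (hik : i ≠ k) (hjk : j ≠ k) :
      ({i, j, k} : Finset (Fin 7)) ∈ powersetCard 3 univ :=
    mem_powersetCard_univ.2 (card_eq_three.2 ⟨i, j, k, hij, hik, hjk, rfl⟩)
  have hpar {i j k : Fin 7} (hij : i ≠ j) (hik : i ≠ k) (hjk : j ≠ k) :
      par (m i + m j + m k) = 0 :=
    par_add_add_eq_zero (hm i) (hm j) (hm k)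
      (e3_eq_neg_one_of_forall_e3_eq_neg_one haz₂ hij hik hjk)
  refine ⟨fun i j k i' j' k' hij hik hjk hij' hik' hjk' hsum => ?_,
    fun i j k hij hik hjk => ⟨hpar hij hik hjk, ?_⟩, ?_, card_filter_par_eq_zero⟩
  · refine hinj (htriple hij hik hjk) (htriple hij' hik' hjk') ?_
    simpa only [sum_triple m hij hik hjk, sum_triple m hij' hik' hjk'] using hsum
  · exact sum_triple m hij hik hjk ▸ hne _ (htriple hij hik hjk)
  refine eq_of_subset_of_card_le (fun x hx => ?_) ?_
  · simp only [mem_insert, mem_image, mem_filter, mem_univ, true_and] at hx ⊢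
    rcases hx with rfl | ⟨⟨i, j, k⟩, ⟨hij, hik, hjk⟩, rfl⟩
    exacts [hn, hpar hij hik hjk]
  · rw [image_triples_eq_image_powersetCard, card_filter_par_eq_zero, card_insert_of_notMem,
      card_image_of_injOn hinj, card_powersetCard]
    · rfl
    · simpa using hne

theorem fundamental_system_even_characteristics (n₀ : V 3) (m : Fin 7 → V 3)
    (hn : par n₀ = 0) (hm : ∀ i, par (m i) = 1)
    (hinj : Function.Injective m) (hne : ∀ i, n₀ ≠ m i)
    (haz₁ : ∀ i j k : Fin 7, i ≠ j → i ≠ k → j ≠ k → e3 (m i) (m j) (m k) = -1)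
    (haz₂ : ∀ i j : Fin 7, i ≠ j → e3 n₀ (m i) (m j) = -1) :
    (∀ i j k i' j' k' : Fin 7, i ≠ j → i ≠ k → j ≠ k → i' ≠ j' → i' ≠ k' → j' ≠ k' →
      m i + m j + m k = m i' + m j' + m k' →
      ({i, j, k} : Finset (Fin 7)) = {i', j', k'}) ∧
    (∀ i j k : Fin 7, i ≠ j → i ≠ k → j ≠ k →
      par (m i + m j + m k) = 0 ∧ m i + m j + m k ≠ n₀) ∧
    (insert n₀
        ((univ.filter (fun t : Fin 7 × Fin 7 × Fin 7 =>
            t.1 ≠ t.2.1 ∧ t.1 ≠ t.2.2 ∧ t.2.1 ≠ t.2.2)).image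
          (fun t => m t.1 + m t.2.1 + m t.2.2)) =
      univ.filter (fun x : V 3 => par x = 0)) ∧
    (univ.filter (fun x : V 3 => par x = 0)).card = 36 :=
  fundamental_system_even_characteristics_general n₀ m hn hm haz₂
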